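/- For each integer L ≥ 2, let q_L be the probability distribution on Fin L with q_L(0) = L^{−1/2} and q_L(i) = (1 − L^{−1/2})/(L−1) for i ≠ 0. Then R₂(q_L)/log L → 1 as L → ∞, and for every α > 2, R_α(q_L)/log L → α/(2(α−1)) as L → ∞. Since α/(2(α−1)) < 1 for α > 2, this family has α-Rényi entropy asymptotically strictly smaller than its second Rényi entropy. -/

import Mathlib

/-!
The atom `q_L(0) = L^{-1/2}` contributes `L^{-α/2}` to the power sum `∑ q_L(s)^α`, and for `α ≥ 2`
the other `L - 1` atoms contribute `(1 - L^{-1/2})^α (L-1)^{1-α} ≤ 2^{α-1} L^{-α/2}`. Hence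
`log ∑ q_L(s)^α = -(α/2) log L + O(1)`, and `R_α(q_L) / log L → α / (2(α-1))`, which is `1` at
`α = 2`.
-/

open Finset Filter

noncomputable section

/-- Rényi entropy of order `α` of a distribution on `Fin L` (Shannon entropy at `α = 1`),
with natural logarithms, the sums running over the support of `p`. -/
def renyi {L : ℕ} (α : ℝ) (p : Fin L → ℝ) : ℝ :=
  if α = 1 then -∑ s, (if 0 < p s then p s * Real.log (p s) else 0)
  else (1 - α)⁻¹ * Real.log (∑ s, (if 0 < p s then p s ^ α else 0))

/-- The distribution `{L^{-1/2}, (1-L^{-1/2})/(L-1), …}` on `Fin L`. -/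
def qSpike (L : ℕ) : Fin L → ℝ :=
  fun i => if (i : ℕ) = 0 then (L : ℝ) ^ (-(1 / 2) : ℝ)
    else (1 - (L : ℝ) ^ (-(1 / 2) : ℝ)) / ((L : ℝ) - 1)

open Real Topology

theorem tendsto_log_div_log_of_rpow_bounds {ι : Type*} {l : Filter ι} {u x : ι → ℝ} {a C : ℝ}
    (hx : Tendsto x l atTop) (hlow : ∀ᶠ i in l, x i ^ (-a) ≤ u i)
    (hup : ∀ᶠ i in l, u i ≤ C * x i ^ (-a)) :
    Tendsto (fun i => log (u i) / log (x i)) l (𝓝 (-a)) := by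
  have hx1 : ∀ᶠ i in l, 1 < x i := hx.eventually_gt_atTop 1
  set r : ι → ℝ := fun i => log (u i) + a * log (x i)
  have hr : ∀ᶠ i in l, 0 ≤ r i ∧ r i ≤ log C := by
    filter_upwards [hx1, hlow, hup] with i hxi hlo hhi
    have hpow : 0 < x i ^ (-a) := rpow_pos_of_pos (by linarith) _
    have hC : 0 < C := pos_of_mul_pos_left (hpow.trans_le (hlo.trans hhi)) hpow.le
    have hlog_pow : log (x i ^ (-a)) = -a * log (x i) := log_rpow (by linarith) _
    constructor
    · have := log_le_log hpow hlo
      simp only [r]; linarith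
    · have := log_le_log (hpow.trans_le hlo) hhi
      rw [log_mul hC.ne' hpow.ne'] at this
      simp only [r]; linarith
  have hr_div : Tendsto (fun i => r i / log (x i)) l (𝓝 0) :=
    tendsto_bdd_div_atTop_nhds_zero (hr.mono fun _ h => h.1) (hr.mono fun _ h => h.2)
      (tendsto_log_atTop.comp hx)
  rw [← add_zero (-a)]
  refine (hr_div.const_add (-a)).congr' ?_
  filter_upwards [hx1] with i hxi
  have : log (x i) ≠ 0 := (log_pos hxi).ne'
  simp only [r]
  field_simp
  ring

lemma renyi_eq_of_pos {L : ℕ} {α : ℝ} {p : Fin L → ℝ} (hp : ∀ s, 0 < p s) (hα : α ≠ 1) :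
    renyi α p = (1 - α)⁻¹ * log (∑ s, p s ^ α) := by
  simp [renyi, hα, hp]

lemma sub_one_mul_div_rpow_le {x a α : ℝ} (hx : 2 ≤ x) (ha : 0 ≤ a) (ha1 : a ≤ 1) (hα : 2 ≤ α) :
    (x - 1) * (a / (x - 1)) ^ α ≤ 2 ^ (α - 1) * x ^ (-(α / 2)) := by
  have hx1 : 0 < x - 1 := by linarith
  calc (x - 1) * (a / (x - 1)) ^ α ≤ (x - 1) * (1 / (x - 1)) ^ α :=
        mul_le_mul_of_nonneg_left (rpow_le_rpow (div_nonneg ha hx1.le)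
          (div_le_div_of_nonneg_right ha1 hx1.le) (by linarith)) hx1.le
    _ = (x - 1) ^ (1 - α) := by
        rw [one_div, inv_rpow (by linarith), rpow_sub (by linarith), rpow_one, div_eq_mul_inv]
    _ ≤ (x / 2) ^ (1 - α) := rpow_le_rpow_of_nonpos (by positivity) (by linarith) (by linarith)
    _ = 2 ^ (α - 1) * x ^ (1 - α) := by
        rw [div_rpow (by linarith) zero_le_two, div_eq_mul_inv, ← rpow_neg zero_le_two, neg_sub,
          mul_comm]
    _ ≤ 2 ^ (α - 1) * x ^ (-(α / 2)) := by gcongr <;> linarith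

section qSpike

variable {L : ℕ}

lemma qSpike_pos (hL : 2 ≤ L) (s : Fin L) : 0 < qSpike L s := by
  have hL' : (2 : ℝ) ≤ L := by exact_mod_cast hL
  have hspike : (L : ℝ) ^ (-(1 / 2) : ℝ) < 1 :=
    rpow_lt_one_of_one_lt_of_neg (by linarith) (by norm_num)
  unfold qSpike
  split
  · positivity
  · exact div_pos (by linarith) (by linarith)

lemma sum_qSpike_rpow (hL : 2 ≤ L) (α : ℝ) :
    ∑ s, qSpike L s ^ α = (L : ℝ) ^ (-(α / 2))
      + ((L : ℝ) - 1) * ((1 - (L : ℝ) ^ (-(1 / 2) : ℝ)) / ((L : ℝ) - 1)) ^ α := by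
  obtain ⟨n, rfl⟩ : ∃ n, L = n + 1 := ⟨L - 1, by omega⟩
  rw [Fin.sum_univ_succ]
  simp [qSpike, ← rpow_mul (by positivity : (0 : ℝ) ≤ n + 1)]
  ring_nf

lemma le_sum_qSpike_rpow (hL : 2 ≤ L) (α : ℝ) :
    (L : ℝ) ^ (-(α / 2)) ≤ ∑ s, qSpike L s ^ α := by
  rw [sum_qSpike_rpow hL]
  have hL' : (2 : ℝ) ≤ L := by exact_mod_cast hL
  have hspike : (L : ℝ) ^ (-(1 / 2) : ℝ) ≤ 1 :=
    rpow_le_one_of_one_le_of_nonpos (by linarith) (by norm_num)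
  have : 0 ≤ ((L : ℝ) - 1) * ((1 - (L : ℝ) ^ (-(1 / 2) : ℝ)) / ((L : ℝ) - 1)) ^ α :=
    mul_nonneg (by linarith) (rpow_nonneg (div_nonneg (by linarith) (by linarith)) _)
  linarith

lemma sum_qSpike_rpow_le (hL : 2 ≤ L) {α : ℝ} (hα : 2 ≤ α) :
    ∑ s, qSpike L s ^ α ≤ (1 + 2 ^ (α - 1)) * (L : ℝ) ^ (-(α / 2)) := by
  rw [sum_qSpike_rpow hL]
  have hL' : (2 : ℝ) ≤ L := by exact_mod_cast hL
  have hspike_pos : 0 < (L : ℝ) ^ (-(1 / 2) : ℝ) := by positivity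
  have hspike_le : (L : ℝ) ^ (-(1 / 2) : ℝ) ≤ 1 :=
    rpow_le_one_of_one_le_of_nonpos (by linarith) (by norm_num)
  have := sub_one_mul_div_rpow_le (a := 1 - (L : ℝ) ^ (-(1 / 2) : ℝ)) hL' (by linarith)
    (by linarith) hα
  linarith

theorem tendsto_renyi_qSpike_div_log {α : ℝ} (hα : 2 ≤ α) :
    Tendsto (fun L : ℕ => renyi α (qSpike L) / log L) atTop (𝓝 (α / (2 * (α - 1)))) := by
  have hlog : Tendsto (fun L : ℕ => log (∑ s, qSpike L s ^ α) / log L) atTop (𝓝 (-(α / 2))) :=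
    tendsto_log_div_log_of_rpow_bounds tendsto_natCast_atTop_atTop
      ((eventually_ge_atTop 2).mono fun L hL => le_sum_qSpike_rpow hL α)
      ((eventually_ge_atTop 2).mono fun L hL => sum_qSpike_rpow_le hL hα)
  have hlim : (1 - α)⁻¹ * -(α / 2) = α / (2 * (α - 1)) := by
    rw [← neg_sub, inv_neg, neg_mul_neg, inv_mul_eq_div, div_div, mul_comm]
  rw [← hlim]
  refine (hlog.const_mul _).congr' ((eventually_ge_atTop 2).mono fun L hL => ?_)
  dsimp only
  rw [renyi_eq_of_pos (qSpike_pos hL) (by linarith), mul_div_assoc]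

end qSpike

/-- For the family `qSpike L`, `R₂(q_L)/log L → 1` while
`R_α(q_L)/log L → α/(2(α-1))` for every `α > 2`. -/
theorem qspike_family_renyi :
    Tendsto (fun L : ℕ => renyi 2 (qSpike L) / Real.log L) atTop (nhds 1) ∧
      ∀ α : ℝ, 2 < α →
        Tendsto (fun L : ℕ => renyi α (qSpike L) / Real.log L) atTop
          (nhds (α / (2 * (α - 1)))) := by
  refine ⟨?_, fun α hα => tendsto_renyi_qSpike_div_log hα.le⟩
  convert tendsto_renyi_qSpike_div_log (le_refl (2 : ℝ))
  norm_num

end
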